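/- arXiv:math/0502266 — 4 statements merged into one kernel-verified Lean document; each statement's English description precedes it below -/
import Mathlib

section
/- If ω is a nonsingular balanced 1-cocycle on a finite connected graph Γ, then ω(e) = 0 if and only if the edge {e, ē} is a separating edge of Γ. -/
/-!
If `{e, ē}` separates `Γ`, let `C` be the component of `tar e` in `Γ ∖ {e, ē}`. Summing the
vertex conditions over `C`, the half-edges inside `C` cancel in pairs, and `e` is the only
half-edge entering `C` from outside, so `ω(e) = 0`.

Conversely, the values of a balanced cocycle on a connected graph of rank `n` span at most an
`n`-dimensional space: delete a non-separating edge `e` and apply induction to `ω` modulo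
`ω(e)`, which is balanced on the connected graph `Γ ∖ {e, ē}` of rank `n - 1`; if every edge
separates, then `ω = 0`. So if `ω(e) = 0` with `e` non-separating, the values of `ω` are those
of a balanced cocycle on `Γ ∖ {e, ē}` and span at most `r - 1` dimensions, contradicting
nonsingularity.
-/

open Finset

/-- A finite graph: vertices, half-edges with a free involution, and a target map. -/
structure FinGraph where
  V : Type
  H : Type
  [fV : Fintype V]
  [fH : Fintype H]
  [dV : DecidableEq V]
  [dH : DecidableEq H]
  bar : H → H
  bar_invol : ∀ e, bar (bar e) = e
  bar_ne : ∀ e, bar e ≠ e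
  tar : H → V

attribute [instance] FinGraph.fV FinGraph.fH FinGraph.dV FinGraph.dH

namespace FinGraph

variable (G : FinGraph)

/-- The source of a half-edge is the target of its other half. -/
def src (e : G.H) : G.V := G.tar (G.bar e)

/-- One step along a half-edge belonging to the allowed set `A`. -/
def Step (A : Set G.H) (v w : G.V) : Prop := ∃ e, e ∈ A ∧ G.src e = v ∧ G.tar e = w

/-- Reachability using only half-edges in `A`. -/
def ReachIn (A : Set G.H) (v w : G.V) : Prop := Relation.ReflTransGen (G.Step A) v w

/-- The graph is connected. -/
def Connected : Prop := ∀ v w : G.V, G.ReachIn Set.univ v w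

/-- The valence of a vertex: the number of half-edges incident to it. -/
def valence (v : G.V) : ℕ := (univ.filter (fun e => G.tar e = v)).card

/-- An edge `{e, ē}` is separating if deleting it disconnects the graph. -/
def IsSeparating (e : G.H) : Prop :=
  ¬ ∀ v w : G.V, G.ReachIn {h | h ≠ e ∧ h ≠ G.bar e} v w

/-- The graph has first Betti number (rank) `n`; for a connected graph this
says `#edges = #vertices + n - 1`, i.e. `#H + 2 = 2(#V + n)`. -/
def HasRank (n : ℕ) : Prop := Fintype.card G.H + 2 = 2 * (Fintype.card G.V + n)

end FinGraph

namespace FinGraph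

variable (G : FinGraph)

/-- A balanced 1-cocycle with values in an additive group. -/
def IsBalanced {W : Type*} [AddCommGroup W] (ω : G.H → W) : Prop :=
  (∀ e, ω (G.bar e) = - ω e) ∧
  ∀ v : G.V, ∑ e ∈ univ.filter (fun e => G.tar e = v), ω e = 0

/-- The space `Ω¹(Γ, V)` of balanced `V`-valued 1-cocycles. -/
def Omega (W : Type*) [AddCommGroup W] [Module ℝ W] : Submodule ℝ (G.H → W) where
  carrier := {ω | G.IsBalanced ω}
  zero_mem' := ⟨fun e => by simp, fun v => by simp⟩
  add_mem' := by
    intro a b ha hb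
    refine ⟨fun e => ?_, fun v => ?_⟩
    · simp only [Pi.add_apply, ha.1 e, hb.1 e]; abel
    · simp only [Pi.add_apply, Finset.sum_add_distrib, ha.2 v, hb.2 v, add_zero]
  smul_mem' := by
    intro r a ha
    refine ⟨fun e => ?_, fun v => ?_⟩
    · simp only [Pi.smul_apply, ha.1 e, smul_neg]
    · simp only [Pi.smul_apply, ← Finset.smul_sum, ha.2 v, smul_zero]

/-- The group of 1-cycles (the model for `H₁(Γ)`): antisymmetric integer functions
on half-edges with vanishing vertex sums. -/
def cycles : AddSubgroup (G.H → ℤ) where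
  carrier := {c | G.IsBalanced c}
  zero_mem' := ⟨fun e => by simp, fun v => by simp⟩
  add_mem' := by
    intro a b ha hb
    refine ⟨fun e => ?_, fun v => ?_⟩
    · simp only [Pi.add_apply, ha.1 e, hb.1 e]; abel
    · simp only [Pi.add_apply, Finset.sum_add_distrib, ha.2 v, hb.2 v, add_zero]
  neg_mem' := by
    intro a ha
    refine ⟨fun e => ?_, fun v => ?_⟩
    · simp only [Pi.neg_apply, ha.1 e]
    · simp only [Pi.neg_apply, Finset.sum_neg_distrib, ha.2 v, neg_zero]

/-- A spanning (maximal) tree, given as a `bar`-closed set of half-edges. -/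
def IsSpanningTree (S : Finset G.H) : Prop :=
  (∀ e ∈ S, G.bar e ∈ S) ∧ (∀ v w : G.V, G.ReachIn ↑S v w) ∧
    S.card + 2 = 2 * Fintype.card G.V

/-- `es` is a choice of one half-edge from each of the `r` edges not in `S`. -/
def IsComplement (S : Finset G.H) {r : ℕ} (es : Fin r → G.H) : Prop :=
  (∀ i, es i ∉ S) ∧ ∀ e ∉ S, ∃! i, e = es i ∨ e = G.bar (es i)

/-- `ω` is nonsingular: its values span an `r`-dimensional subspace. -/
def Nonsingular {W : Type*} [AddCommGroup W] [Module ℝ W] (ω : G.H → W) (r : ℕ) : Prop :=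
  Module.finrank ℝ ↥(Submodule.span ℝ (Set.range ω)) = r

/-- A length function on the graph. -/
def IsLengthFunction (lam : G.H → ℝ) : Prop :=
  (∀ e, 0 ≤ lam e ∧ lam e ≤ 1/2) ∧ (∀ e, lam (G.bar e) = lam e) ∧
    ∀ c ∈ G.cycles, c ≠ 0 → ∃ e, c e ≠ 0 ∧ lam e = 1/2

end FinGraph

open Module

lemma Submodule.finrank_le_finrank_map_mkQ_span_singleton_add_one {K W : Type*} [DivisionRing K]
    [AddCommGroup W] [Module K W] (S : Submodule K W) [FiniteDimensional K S] (x : W) :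
    finrank K S ≤ finrank K (S.map (K ∙ x).mkQ) + 1 := by
  have hrank := LinearMap.finrank_range_add_finrank_ker ((K ∙ x).mkQ.domRestrict S)
  rw [LinearMap.range_domRestrict] at hrank
  have hker : finrank K (LinearMap.ker ((K ∙ x).mkQ.domRestrict S)) ≤ 1 := by
    rw [LinearMap.ker_domRestrict, Submodule.ker_mkQ,
      (Submodule.equivSubtypeMap S _).finrank_eq, Submodule.map_comap_subtype]
    calc _ ≤ finrank K (K ∙ x) := Submodule.finrank_mono inf_le_right
      _ ≤ 1 := (finrank_span_le_card {x}).trans (by simp)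
  omega

namespace FinGraph

variable (G : FinGraph)

@[simp]
lemma bar_bar (e : G.H) : G.bar (G.bar e) = e := G.bar_invol e

lemma bar_injective : Function.Injective G.bar :=
  Function.LeftInverse.injective G.bar_bar

@[simp]
lemma src_bar (e : G.H) : G.src (G.bar e) = G.tar e := by simp [src]

@[simp]
lemma tar_bar (e : G.H) : G.tar (G.bar e) = G.src e := rfl

def avoiding (e : G.H) : Set G.H := {h | h ≠ e ∧ h ≠ G.bar e}

variable {G}

lemma bar_mem_avoiding {e h : G.H} (hh : h ∈ G.avoiding e) : G.bar h ∈ G.avoiding e :=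
  ⟨fun hc => hh.2 (by rw [← hc, bar_bar]), fun hc => hh.1 (G.bar_injective hc)⟩

lemma ReachIn.symm {A : Set G.H} (hA : ∀ h ∈ A, G.bar h ∈ A) {v w : G.V}
    (hvw : G.ReachIn A v w) : G.ReachIn A w v := by
  induction hvw with
  | refl => exact .refl
  | tail _ hstep ih =>
    obtain ⟨f, hf, rfl, rfl⟩ := hstep
    exact .head ⟨G.bar f, hA f hf, by simp, rfl⟩ ih

lemma ReachIn.reachIn_avoiding {e : G.H} (he : G.ReachIn (G.avoiding e) (G.tar e) (G.src e))
    {v w : G.V} (hvw : G.ReachIn Set.univ v w) : G.ReachIn (G.avoiding e) v w := by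
  induction hvw with
  | refl => exact .refl
  | tail _ hstep ih =>
    obtain ⟨f, -, rfl, rfl⟩ := hstep
    refine ih.trans ?_
    by_cases hfe : f = e
    · subst hfe
      exact he.symm fun _ => bar_mem_avoiding
    by_cases hfe' : f = G.bar e
    · subst hfe'
      rw [src_bar]
      exact he
    · exact .single ⟨f, ⟨hfe, hfe'⟩, rfl, rfl⟩

lemma Connected.not_reachIn_avoiding (hconn : G.Connected) {e : G.H} (hsep : G.IsSeparating e) :
    ¬ G.ReachIn (G.avoiding e) (G.tar e) (G.src e) :=
  fun he => hsep fun v w => he.reachIn_avoiding (hconn v w)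

section Balanced

variable {W : Type*} [AddCommGroup W] {ω : G.H → W}

lemma IsBalanced.comp (hω : G.IsBalanced ω) {W' : Type*} [AddCommGroup W'] (f : W →+ W') :
    G.IsBalanced (f ∘ ω) :=
  ⟨fun e => by simp [hω.1 e], fun v => by simp [← map_sum, hω.2 v]⟩

lemma IsBalanced.sum_boundary_eq_zero (hω : G.IsBalanced ω) (C : Finset G.V) :
    ∑ h ∈ univ.filter (fun h => G.tar h ∈ C ∧ G.src h ∉ C), ω h = 0 := by
  have hall : ∑ h ∈ univ.filter (fun h => G.tar h ∈ C), ω h = 0 := by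
    rw [← sum_fiberwise_of_maps_to (g := G.tar) (t := C) (by simp)]
    refine sum_eq_zero fun v _ => ?_
    rw [filter_filter, ← hω.2 v]
    congr 1
    ext h
    simp only [mem_filter, mem_univ, true_and, and_iff_right_iff_imp]
    exact fun hv => hv ▸ ‹v ∈ C›
  have hinner : ∑ h ∈ univ.filter (fun h => G.tar h ∈ C ∧ G.src h ∈ C), ω h = 0 :=
    sum_involution (fun h _ => G.bar h) (fun h _ => by simp [hω.1 h])
      (fun h _ _ => G.bar_ne h) (fun h hh => by simp_all [and_comm]) (fun h _ => G.bar_bar h)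
  rwa [← sum_filter_add_sum_filter_not _ (fun h => G.src h ∈ C), filter_filter,
    filter_filter, hinner, zero_add] at hall

lemma IsBalanced.eq_zero_of_not_reachIn (hω : G.IsBalanced ω) {e : G.H}
    (he : ¬ G.ReachIn (G.avoiding e) (G.tar e) (G.src e)) : ω e = 0 := by
  classical
  set C := univ.filter fun u => G.ReachIn (G.avoiding e) (G.tar e) u
  have hboundary : univ.filter (fun h => G.tar h ∈ C ∧ G.src h ∉ C) = {e} := by
    ext h
    simp only [C, mem_filter, mem_univ, true_and, mem_singleton]
    constructor
    · rintro ⟨htar, hsrc⟩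
      by_contra hhe
      have hhe' : h ≠ G.bar e := by
        rintro rfl
        exact he htar
      exact hsrc (htar.trans (ReachIn.symm (fun _ => bar_mem_avoiding)
        (.single ⟨h, ⟨hhe, hhe'⟩, rfl, rfl⟩)))
    · rintro rfl
      exact ⟨.refl, he⟩
  simpa [hboundary] using hω.sum_boundary_eq_zero C

lemma IsBalanced.eq_zero_of_isSeparating (hω : G.IsBalanced ω) (hconn : G.Connected) {e : G.H}
    (hsep : G.IsSeparating e) : ω e = 0 :=
  hω.eq_zero_of_not_reachIn (hconn.not_reachIn_avoiding hsep)

end Balanced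

variable (G) in
def delete (e : G.H) : FinGraph where
  V := G.V
  H := {h // h ≠ e ∧ h ≠ G.bar e}
  bar h := ⟨G.bar h, bar_mem_avoiding h.2⟩
  bar_invol h := Subtype.ext (G.bar_bar h)
  bar_ne h hc := G.bar_ne h (congrArg Subtype.val hc)
  tar h := G.tar h

lemma card_H_delete (e : G.H) : Fintype.card (G.delete e).H + 2 = Fintype.card G.H := by
  have hcard : Fintype.card (G.delete e).H = #((univ.erase e).erase (G.bar e)) := by
    refine Fintype.card_of_subtype _ fun h => ?_
    simp [and_comm]
  rw [hcard, card_erase_of_mem (by simpa using G.bar_ne e), card_erase_of_mem (mem_univ e),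
    card_univ]
  have : 2 ≤ Fintype.card G.H := by
    simpa [card_pair (G.bar_ne e)] using card_le_univ {G.bar e, e}
  omega

lemma connected_delete {e : G.H} (he : ¬ G.IsSeparating e) : (G.delete e).Connected := by
  intro v w
  induction not_not.1 he v w with
  | refl => exact .refl
  | tail _ hstep ih =>
    obtain ⟨f, hf, rfl, rfl⟩ := hstep
    exact ih.tail ⟨⟨f, hf⟩, trivial, rfl, rfl⟩

lemma IsBalanced.delete {W : Type*} [AddCommGroup W] {ω : G.H → W} (hω : G.IsBalanced ω)
    {e : G.H} (he : ω e = 0) : (G.delete e).IsBalanced fun h => ω h.1 := by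
  refine ⟨fun h => hω.1 h.1, fun (v : G.V) => ?_⟩
  have hbar : ω (G.bar e) = 0 := by simp [hω.1 e, he]
  have hrest : ∑ h : {h // ¬ (h ≠ e ∧ h ≠ G.bar e)}, (if G.tar h = v then ω h else 0) = 0 := by
    refine sum_eq_zero fun ⟨h, hh⟩ _ => ?_
    obtain rfl | rfl : h = e ∨ h = G.bar e := by simpa only [not_and_or, not_not] using hh
    all_goals simp [he, hbar]
  rw [← hω.2 v, sum_filter, sum_filter, ← Fintype.sum_subtype_add_sum_subtype
    (fun h => h ≠ e ∧ h ≠ G.bar e), hrest, add_zero]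
  rfl

lemma IsBalanced.span_range_delete {R W : Type*} [Semiring R] [AddCommGroup W] [Module R W]
    {ω : G.H → W} (hω : G.IsBalanced ω) {e : G.H} (he : ω e = 0) :
    Submodule.span R (Set.range fun h : (G.delete e).H => ω h.1) = Submodule.span R (Set.range ω) := by
  refine le_antisymm (Submodule.span_mono (Set.range_comp_subset_range _ ω)) ?_
  rw [Submodule.span_le]
  rintro _ ⟨h, rfl⟩
  by_cases hh : h ∈ G.avoiding e
  · exact Submodule.subset_span ⟨⟨h, hh⟩, rfl⟩
  obtain rfl | rfl : h = e ∨ h = G.bar e := by simpa [avoiding, or_iff_not_imp_left] using hh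
  all_goals simp [hω.1, he]

def toSimpleGraph : SimpleGraph G.V :=
  SimpleGraph.fromRel fun v w => ∃ e, G.src e = v ∧ G.tar e = w

lemma ReachIn.toSimpleGraph_reachable {A : Set G.H} {v w : G.V} (hvw : G.ReachIn A v w) :
    G.toSimpleGraph.Reachable v w := by
  induction hvw with
  | refl => rfl
  | tail _ hstep ih =>
    obtain ⟨f, -, rfl, rfl⟩ := hstep
    by_cases hloop : G.src f = G.tar f
    · rwa [← hloop]
    · exact ih.trans (SimpleGraph.Adj.reachable ⟨hloop, .inl ⟨f, rfl, rfl⟩⟩)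

-- Every edge of the simple graph is `s(src f, tar f)` for both halves `f`, `f̄` of some edge.
lemma two_mul_card_edgeFinset_toSimpleGraph_le [DecidableRel G.toSimpleGraph.Adj] :
    2 * #G.toSimpleGraph.edgeFinset ≤ Fintype.card G.H := by
  refine (mul_card_image_le_card_of_maps_to (s := univ.filter fun e => G.src e ≠ G.tar e)
    (f := fun e => s(G.src e, G.tar e)) (fun e he => ?_) 2 fun b hb => ?_).trans (card_le_univ _)
  · rw [SimpleGraph.mem_edgeFinset, SimpleGraph.mem_edgeSet]
    exact ⟨(mem_filter.1 he).2, .inl ⟨e, rfl, rfl⟩⟩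
  induction b using Sym2.ind with
  | h v w =>
    obtain ⟨f, hfne, hf⟩ : ∃ f, G.src f ≠ G.tar f ∧ s(G.src f, G.tar f) = s(v, w) := by
      obtain ⟨hvw, ⟨f, rfl, rfl⟩ | ⟨f, rfl, rfl⟩⟩ := by
        rw [SimpleGraph.mem_edgeFinset, SimpleGraph.mem_edgeSet] at hb
        simpa [toSimpleGraph] using hb
      exacts [⟨f, hvw, rfl⟩, ⟨f, fun h => hvw h.symm, Sym2.eq_swap⟩]
    calc 2 = #{f, G.bar f} := (card_pair (G.bar_ne f).symm).symm
      _ ≤ _ := card_le_card fun h hh => by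
        rcases mem_insert.1 hh with rfl | hh
        · simp only [mem_filter, mem_univ, true_and]
          exact ⟨hfne, hf⟩
        · simp only [mem_singleton.1 hh, mem_filter, mem_univ, true_and, src_bar, tar_bar]
          exact ⟨hfne.symm, Sym2.eq_swap.trans hf⟩

lemma Connected.two_mul_card_V_le (hconn : G.Connected) :
    2 * Fintype.card G.V ≤ Fintype.card G.H + 2 := by
  classical
  cases isEmpty_or_nonempty G.V
  · simp
  have hsimple : G.toSimpleGraph.Connected :=
    .mk fun v w => (hconn v w).toSimpleGraph_reachable
  have hcard := hsimple.card_vert_le_card_edgeSet_add_one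
  rw [Nat.card_eq_fintype_card, Nat.card_eq_fintype_card, ← SimpleGraph.edgeFinset_card] at hcard
  have := G.two_mul_card_edgeFinset_toSimpleGraph_le
  omega

lemma HasRank.pos_of_connected_delete {n : ℕ} (hn : G.HasRank n) {e : G.H}
    (hconn : (G.delete e).Connected) : 0 < n := by
  have := hconn.two_mul_card_V_le
  have := G.card_H_delete e
  unfold HasRank at hn
  change 2 * Fintype.card G.V ≤ _ at *
  omega

lemma HasRank.delete {n : ℕ} (hn : G.HasRank (n + 1)) (e : G.H) : (G.delete e).HasRank n := by
  have := G.card_H_delete e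
  unfold HasRank at *
  change _ = 2 * (Fintype.card G.V + n)
  omega

theorem IsBalanced.finrank_span_range_le {K : Type*} [DivisionRing K] {n : ℕ}
    (hconn : G.Connected) (hn : G.HasRank n) {W : Type*} [AddCommGroup W] [Module K W]
    {ω : G.H → W} (hω : G.IsBalanced ω) : finrank K (Submodule.span K (Set.range ω)) ≤ n := by
  induction n using Nat.strong_induction_on generalizing G W with
  | _ n ih =>
  by_cases hsep : ∀ e, G.IsSeparating e
  · have hspan : Submodule.span K (Set.range ω) = ⊥ := Submodule.span_eq_bot.2 <| by
      rintro _ ⟨e, rfl⟩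
      exact hω.eq_zero_of_isSeparating hconn (hsep e)
    rw [hspan, finrank_bot]
    exact n.zero_le
  obtain ⟨e, he⟩ := not_forall.1 hsep
  have hconn' := connected_delete he
  obtain ⟨m, rfl⟩ := Nat.exists_eq_add_one.2 (hn.pos_of_connected_delete hconn')
  have : FiniteDimensional K (Submodule.span K (Set.range ω)) :=
    FiniteDimensional.span_of_finite K (Set.finite_range ω)
  have := (Submodule.span K (Set.range ω)).finrank_le_finrank_map_mkQ_span_singleton_add_one (ω e)
  set π := (K ∙ ω e).mkQ
  have hπω : G.IsBalanced (π ∘ ω) := hω.comp π.toAddMonoidHom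
  have hπe : (π ∘ ω) e = 0 := by simp [π]
  have hquot := ih m m.lt_add_one hconn' (hn.delete e) (hπω.delete hπe)
  rw [hπω.span_range_delete hπe, Set.range_comp, ← Submodule.map_span] at hquot
  omega

end FinGraph

/-- a nonsingular balanced cocycle vanishes on a half-edge iff the
corresponding edge is separating. -/
theorem nonsingular_vanishes_iff_separating (G : FinGraph) (r : ℕ) (hconn : G.Connected)
    (hrank : G.HasRank r) (W : Type) [AddCommGroup W] [Module ℝ W]
    (ω : G.H → W) (hω : ω ∈ G.Omega W) (hns : G.Nonsingular ω r) :
    ∀ e : G.H, ω e = 0 ↔ G.IsSeparating e := by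
  have hbal : G.IsBalanced ω := hω
  refine fun e => ⟨fun he => ?_, hbal.eq_zero_of_isSeparating hconn⟩
  by_contra hnsep
  have hconn' := G.connected_delete hnsep
  obtain ⟨m, rfl⟩ := Nat.exists_eq_add_one.2 (hrank.pos_of_connected_delete hconn')
  have hle := (hbal.delete he).finrank_span_range_le (K := ℝ) hconn' (hrank.delete e)
  rw [hbal.span_range_delete he] at hle
  unfold FinGraph.Nonsingular at hns
  omega
end

section
/- Let Γ be a finite connected graph with a length function λ: Γ₁ → [0, 1/2] satisfying λ(ē) = λ(e) and λ(e) = 1/2 for at least one half-edge in each cycle. Then the map λ_*: Ω¹(Γ, V) → Hom(H₁(Γ), V) defined by λ_*(ω)(Σ nᵢ eᵢ) = 2 Σ nᵢ λ(eᵢ) ω(eᵢ) is an isomorphism. -/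
open Finset

/-!
The pairing `⟨u, v⟩ = Σₑ λ(e) u(e) v(e)` is positive definite on `Ω¹(Γ, ℝ)`. Indeed, if
`⟨u, u⟩ = 0` then `u` vanishes wherever `λ ≠ 0`. Expanding the values of `u` in a `ℤ`-basis of the
lattice they generate writes `u` as a real combination of integer cycles supported inside the
support of `u`, and each nonzero integer cycle passes through an edge of length `1/2`.

A `ℤ`-basis `bᵢ` of `H₁(Γ)` stays linearly independent over `ℝ` and spans `Ω¹(Γ, ℝ)`, so it has a
dual basis `dᵢ` for the pairing. Then `ω = Σᵢ dᵢ ⊗ λ_*(ω)(bᵢ)` for every `ω ∈ Ω¹(Γ, V)`, and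
`(wᵢ) ↦ Σᵢ dᵢ ⊗ wᵢ` inverts `ω ↦ (λ_*(ω)(bᵢ))ᵢ`.
-/

namespace FinGraph

variable {G : FinGraph}

section IsBalanced

variable {W W' : Type*} [AddCommGroup W] [AddCommGroup W'] {ω : G.H → W}

theorem IsBalanced.map (hω : G.IsBalanced ω) (f : W →+ W') : G.IsBalanced (f ∘ ω) :=
  ⟨fun e => by simp [hω.1 e], fun v => by simp [← map_sum, hω.2 v]⟩

theorem IsBalanced.of_map {f : W →+ W'} (hf : Function.Injective f)
    (h : G.IsBalanced (f ∘ ω)) : G.IsBalanced ω :=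
  ⟨fun e => hf (by simpa using h.1 e), fun v => hf (by simpa [map_sum] using h.2 v)⟩

end IsBalanced

variable (G) in
abbrev realChain : (G.H → ℤ) →ₗ[ℤ] (G.H → ℝ) := (Algebra.linearMap ℤ ℝ).compLeft G.H

@[simp]
theorem realChain_apply (c : G.H → ℤ) (e : G.H) : G.realChain c e = c e := rfl

theorem realChain_mem_Omega {c : G.H → ℤ} (hc : c ∈ G.cycles) : G.realChain c ∈ G.Omega ℝ :=
  IsBalanced.map hc (Int.castAddHom ℝ)

theorem mem_span_realChain_of_isBalanced {u : G.H → ℝ} (hu : G.IsBalanced u) :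
    u ∈ Submodule.span ℝ (G.realChain '' {c | c ∈ G.cycles ∧ ∀ e, u e = 0 → c e = 0}) := by
  let M := Submodule.span ℤ (Set.range u)
  have : Module.Finite ℤ M := Module.Finite.span_of_finite ℤ (Set.finite_range u)
  let x := Module.Free.chooseBasis ℤ M
  let û : G.H → M := fun e => ⟨u e, Submodule.subset_span (Set.mem_range_self e)⟩
  have hû : G.IsBalanced û :=
    IsBalanced.of_map (f := M.subtype.toAddMonoidHom) Subtype.val_injective hu
  let n : Module.Free.ChooseBasisIndex ℤ M → G.H → ℤ := fun k => x.coord k ∘ û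
  have hn : ∀ k, n k ∈ G.cycles ∧ ∀ e, u e = 0 → n k e = 0 := fun k =>
    ⟨hû.map (x.coord k).toAddMonoidHom, fun e he => by
      simp [n, show û e = 0 from Subtype.ext he]⟩
  have hu_eq : u = ∑ k, (x k : ℝ) • G.realChain (n k) := by
    funext e
    calc u e = ((∑ k, x.repr (û e) k • x k : M) : ℝ) := by rw [x.sum_repr]
      _ = _ := by
        simp only [Submodule.coe_sum, Submodule.coe_smul, zsmul_eq_mul]
        simp [n, mul_comm]
  set S := {c | c ∈ G.cycles ∧ ∀ e, u e = 0 → c e = 0}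
  rw [hu_eq]
  exact Submodule.sum_mem _ fun k _ =>
    Submodule.smul_mem _ _ (Submodule.subset_span ⟨n k, hn k, rfl⟩)

variable {lam : G.H → ℝ}

theorem IsLengthFunction.eq_zero_of_isBalanced (hlam : G.IsLengthFunction lam) {u : G.H → ℝ}
    (hu : G.IsBalanced u) (hsupp : ∀ e, lam e ≠ 0 → u e = 0) : u = 0 := by
  have hzero : {c | c ∈ G.cycles ∧ ∀ e, u e = 0 → c e = 0} ⊆ {0} := by
    rintro c ⟨hc, hcu⟩
    by_contra hne
    obtain ⟨e, hce, hlam_e⟩ := hlam.2.2 c hc hne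
    exact hce (hcu e (hsupp e (by norm_num [hlam_e])))
  simpa using Submodule.span_mono (Set.image_mono hzero) (mem_span_realChain_of_isBalanced hu)

variable (lam) in
def lengthForm : LinearMap.BilinForm ℝ (G.H → ℝ) := Matrix.toBilin' (Matrix.diagonal lam)

theorem lengthForm_apply (u v : G.H → ℝ) : lengthForm lam u v = ∑ e, lam e * u e * v e := by
  simp only [lengthForm, Matrix.toBilin'_apply', dotProduct, Matrix.mulVec_diagonal]
  exact Finset.sum_congr rfl fun e _ => by ring

theorem IsLengthFunction.nondegenerate_lengthForm (hlam : G.IsLengthFunction lam) :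
    ((lengthForm lam).restrict (G.Omega ℝ)).Nondegenerate := by
  have hdef : ∀ u : G.Omega ℝ, lengthForm lam u u = 0 → u = 0 := by
    intro u hu
    rw [lengthForm_apply] at hu
    have hterms := (Finset.sum_eq_zero_iff_of_nonneg fun e _ =>
      mul_assoc (lam e) _ _ ▸ mul_nonneg (hlam.1 e).1 (mul_self_nonneg (u.1 e))).mp hu
    refine Subtype.ext (hlam.eq_zero_of_isBalanced u.2 fun e he => ?_)
    simpa [he, mul_assoc] using hterms e (Finset.mem_univ e)
  exact ⟨fun u hu => hdef u (hu u), fun u hu => hdef u (hu u)⟩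

section CycleBasis

instance : Module.Finite ℤ G.cycles :=
  Module.Finite.of_injective G.cycles.subtype.toIntLinearMap Subtype.val_injective

variable {ι : Type*} (b : Module.Basis ι ℤ G.cycles)

theorem linearIndependent_realChain_basis : LinearIndependent ℝ fun i => G.realChain (b i) := by
  have h : LinearIndependent ℤ fun i => (b i : G.H → ℤ) :=
    b.linearIndependent.map' G.cycles.subtype.toIntLinearMap
      (LinearMap.ker_eq_bot.mpr Subtype.val_injective)
  exact (linearIndependent_algebraMap_comp_iff (S := ℝ) (v := fun i => (b i : G.H → ℤ))).mpr h

theorem span_realChain_basis [Fintype ι] :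
    Submodule.span ℝ (Set.range fun i => G.realChain (b i)) = G.Omega ℝ := by
  apply le_antisymm
  · rw [Submodule.span_le]
    rintro _ ⟨i, rfl⟩
    exact realChain_mem_Omega (b i).2
  · intro u hu
    refine Submodule.span_le.mpr ?_ (mem_span_realChain_of_isBalanced hu)
    rintro _ ⟨c, ⟨hc, -⟩, rfl⟩
    have hc_eq : G.realChain c = ∑ i, b.repr ⟨c, hc⟩ i • G.realChain (b i) := by
      conv_lhs => rw [show c = ((∑ i, b.repr ⟨c, hc⟩ i • b i : G.cycles) : G.H → ℤ)
        by rw [b.sum_repr]]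
      simp only [AddSubgroup.val_finsetSum, AddSubgroup.coe_zsmul, map_sum, map_zsmul]
    rw [hc_eq]
    exact Submodule.sum_mem _ fun i _ =>
      Submodule.smul_of_tower_mem _ _ (Submodule.subset_span ⟨i, rfl⟩)

noncomputable def realCycleBasis [Fintype ι] : Module.Basis ι ℝ (G.Omega ℝ) :=
  (Module.Basis.span (linearIndependent_realChain_basis b)).map
    (LinearEquiv.ofEq _ _ (span_realChain_basis b))

@[simp]
theorem coe_realCycleBasis [Fintype ι] (i : ι) :
    (realCycleBasis b i : G.H → ℝ) = G.realChain (b i) := by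
  simp [realCycleBasis]

end CycleBasis

section LamStar

variable {W W' : Type*} [AddCommGroup W] [Module ℝ W] [AddCommGroup W'] [Module ℝ W']

variable (lam) in
def lamStar (ω : G.H → W) : G.cycles →+ W where
  toFun c := ∑ e, (((c : G.H → ℤ) e : ℝ) * lam e) • ω e
  map_zero' := by simp
  map_add' c d := by simp [add_mul, add_smul, Finset.sum_add_distrib]

theorem lamStar_apply (ω : G.H → W) (c : G.cycles) :
    lamStar lam ω c = ∑ e, (((c : G.H → ℤ) e : ℝ) * lam e) • ω e :=
  rfl

theorem map_lamStar (f : W →ₗ[ℝ] W') (ω : G.H → W) (c : G.cycles) :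
    f (lamStar lam ω c) = lamStar lam (f ∘ ω) c := by
  simp [lamStar_apply]

theorem lamStar_real (u : G.H → ℝ) (c : G.cycles) :
    lamStar lam u c = lengthForm lam u (G.realChain c) := by
  rw [lamStar_apply, lengthForm_apply]
  exact Finset.sum_congr rfl fun e _ => by rw [realChain_apply, smul_eq_mul]; ring

variable {ι : Type*} [Fintype ι] [DecidableEq ι] (hlam : G.IsLengthFunction lam)
  (b : Module.Basis ι ℤ G.cycles)

noncomputable def dualCycleBasis : Module.Basis ι ℝ (G.Omega ℝ) :=
  ((lengthForm lam).restrict (G.Omega ℝ)).dualBasis hlam.nondegenerate_lengthForm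
    (realCycleBasis b)

theorem eq_sum_dualCycleBasis_smul_lamStar {ψ : G.H → W} (hψ : ψ ∈ G.Omega W) (e : G.H) :
    ψ e = ∑ i, (dualCycleBasis hlam b i : G.H → ℝ) e • lamStar lam ψ (b i) := by
  refine sub_eq_zero.mp ((Module.forall_dual_apply_eq_zero_iff ℝ _).mp fun f => ?_)
  let u : G.Omega ℝ := ⟨f ∘ ψ, IsBalanced.map hψ f.toAddMonoidHom⟩
  have hu : f (ψ e) = ∑ i, lengthForm lam (f ∘ ψ) (G.realChain (b i)) *
      (dualCycleBasis hlam b i : G.H → ℝ) e := by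
    simpa [dualCycleBasis, u] using
      congrArg (fun v : G.Omega ℝ => (v : G.H → ℝ) e) ((dualCycleBasis hlam b).sum_repr u).symm
  rw [map_sub, sub_eq_zero, hu, map_sum]
  simp [map_lamStar, lamStar_real, mul_comm]

theorem lamStar_sum_dualCycleBasis_smul (w : ι → W) (j : ι) :
    lamStar lam (fun e => ∑ i, (dualCycleBasis hlam b i : G.H → ℝ) e • w i) (b j) = w j := by
  have hdual (i : ι) :
      lengthForm lam (dualCycleBasis hlam b i) (G.realChain (b j)) = if j = i then 1 else 0 := by
    simpa [dualCycleBasis] using LinearMap.BilinForm.apply_dualBasis_left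
      hlam.nondegenerate_lengthForm (realCycleBasis b) i j
  calc lamStar lam (fun e => ∑ i, (dualCycleBasis hlam b i : G.H → ℝ) e • w i) (b j)
      = ∑ i, lengthForm lam (dualCycleBasis hlam b i) (G.realChain (b j)) • w i := by
        simp only [lamStar_apply, lengthForm_apply, Finset.smul_sum, smul_smul, Finset.sum_smul]
        rw [Finset.sum_comm]
        exact Finset.sum_congr rfl fun i _ => Finset.sum_congr rfl fun e _ => by
          rw [realChain_apply]
          congr 1
          ring
    _ = w j := by simp [hdual]

theorem sum_dualCycleBasis_smul_mem_Omega (w : ι → W) :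
    (fun e => ∑ i, (dualCycleBasis hlam b i : G.H → ℝ) e • w i) ∈ G.Omega W := by
  rw [show (fun e => ∑ i, (dualCycleBasis hlam b i : G.H → ℝ) e • w i) =
    ∑ i, fun e => (dualCycleBasis hlam b i : G.H → ℝ) e • w i by ext; simp]
  exact Submodule.sum_mem _ fun i _ =>
    IsBalanced.map (dualCycleBasis hlam b i).2 (LinearMap.toSpanSingleton ℝ W (w i)).toAddMonoidHom

end LamStar

end FinGraph

theorem lambdaStar_isomorphism_general (G : FinGraph)
    (W : Type) [NormedAddCommGroup W] [InnerProductSpace ℝ W]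
    (lam : G.H → ℝ) (hlam : G.IsLengthFunction lam) :
    Function.Injective
        (fun (ω : ↥(G.Omega W)) => (fun c : ↥G.cycles =>
          ∑ e : G.H, (((c : G.H → ℤ) e : ℝ) * lam e) • (ω : G.H → W) e)) ∧
      ∀ φ : ↥G.cycles →+ W, ∃ ω ∈ G.Omega W, ∀ c : ↥G.cycles,
        φ c = ∑ e : G.H, (((c : G.H → ℤ) e : ℝ) * lam e) • ω e := by
  let b := Module.finBasis ℤ G.cycles
  refine ⟨fun ω₁ ω₂ h => Subtype.ext (funext fun e => ?_), fun φ => ?_⟩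
  · have h' (i : Fin _) : G.lamStar lam (ω₁ : G.H → W) (b i) = G.lamStar lam ω₂ (b i) :=
      congrFun h (b i)
    rw [FinGraph.eq_sum_dualCycleBasis_smul_lamStar hlam b ω₁.2,
      FinGraph.eq_sum_dualCycleBasis_smul_lamStar hlam b ω₂.2]
    simp only [h']
  · set ω := fun e => ∑ i, (FinGraph.dualCycleBasis hlam b i : G.H → ℝ) e • φ (b i)
    refine ⟨ω, FinGraph.sum_dualCycleBasis_smul_mem_Omega hlam b fun i => φ (b i), fun c => ?_⟩
    have hφ : φ = G.lamStar lam ω := AddMonoidHom.toIntLinearMap_injective <|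
      b.ext fun j => (FinGraph.lamStar_sum_dualCycleBasis_smul hlam b (fun i => φ (b i)) j).symm
    rw [hφ, FinGraph.lamStar_apply]

/-- for any length function `λ` on `Γ`, the map
`λ_* : Ω¹(Γ,V) → Hom(H₁(Γ), V)`, `λ_*(ω)(Σ nᵢeᵢ) = 2 Σ nᵢ λ(eᵢ) ω(eᵢ)`, is an
isomorphism. (Summing over all half-edges, each edge is counted twice, which
accounts for the factor 2.) -/
theorem lambdaStar_isomorphism (G : FinGraph) (hconn : G.Connected)
    (W : Type) [NormedAddCommGroup W] [InnerProductSpace ℝ W] [FiniteDimensional ℝ W]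
    (lam : G.H → ℝ) (hlam : G.IsLengthFunction lam) :
    Function.Injective
        (fun (ω : ↥(G.Omega W)) => (fun c : ↥G.cycles =>
          ∑ e : G.H, (((c : G.H → ℤ) e : ℝ) * lam e) • (ω : G.H → W) e)) ∧
      ∀ φ : ↥G.cycles →+ W, ∃ ω ∈ G.Omega W, ∀ c : ↥G.cycles,
        φ c = ∑ e : G.H, (((c : G.H → ℤ) e : ℝ) * lam e) • ω e :=
  lambdaStar_isomorphism_general G W lam hlam
end

section
/- Let Γ be a finite connected graph with a nondegenerate length function λ (λ(e) > 0 for all half-edges), and let ω be a balanced 1-cocycle with λ_*(ω) = 0 on H₁(Γ). Define f: Γ₀ → V by f(v₀) = 0 at a base vertex and f(τe) = f(σe) + 2λ(e)ω(e). Then f is well-defined and f ≡ 0, hence ω = 0. -/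
open Finset

/-!
Pairing the cochain `e ↦ λ(e) ω(e)` with the chain of a path from `v₀` defines the potential
`f`; the result does not depend on the path because `λ_*(ω)` vanishes on cycles. Since `ω` is
balanced, `f` is harmonic for the conductances `1 / (2 λ(e))`, so at a vertex where `‖f‖` is
maximal Cauchy–Schwarz forces every neighbour to carry the same value. By connectedness `f` is
constant, hence zero, and then `2 λ(e) ω(e) = f(τe) - f(σe) = 0`.
-/

open scoped RealInnerProductSpace

lemma eq_of_norm_le_of_norm_sq_le_inner {W : Type*} [NormedAddCommGroup W]
    [InnerProductSpace ℝ W] {x y : W} (hy : ‖y‖ ≤ ‖x‖) (h : ‖x‖ ^ 2 ≤ ⟪x, y⟫) :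
    y = x := by
  rw [eq_comm, ← sub_eq_zero, ← norm_eq_zero]
  nlinarith [norm_sub_sq_real x y, norm_nonneg (x - y), norm_nonneg y]

namespace FinGraph

variable {G : FinGraph}

section Chains

def edgeChain (e : G.H) : G.H → ℤ := Pi.single e 1 - Pi.single (G.bar e) 1

lemma edgeChain_bar (e h : G.H) : G.edgeChain e (G.bar h) = - G.edgeChain e h := by
  have hinv : Function.Involutive G.bar := G.bar_invol
  have h₁ : G.bar h = e ↔ h = G.bar e := hinv.eq_iff
  have h₂ : G.bar h = G.bar e ↔ h = e := hinv.injective.eq_iff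
  simp only [edgeChain, Pi.sub_apply, Pi.single_apply, if_congr h₁ rfl rfl,
    if_congr h₂ rfl rfl]
  ring

lemma sum_edgeChain (e : G.H) (v : G.V) :
    ∑ h ∈ univ.filter (fun h => G.tar h = v), G.edgeChain e h
      = (if G.tar e = v then 1 else 0) - (if G.src e = v then 1 else 0) := by
  simp only [edgeChain, Pi.sub_apply, sum_sub_distrib, sum_pi_single', mem_filter,
    mem_univ, true_and, src]
  congr

/-- Stands in for a walk from `u` to `w`, of which only the chain `∑ (δ_e - δ_ē)` matters. -/
def IsPathChain (u w : G.V) (c : G.H → ℤ) : Prop :=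
  (∀ e, c (G.bar e) = - c e) ∧
    ∀ v, ∑ e ∈ univ.filter (fun e => G.tar e = v), c e
      = (if w = v then 1 else 0) - (if u = v then 1 else 0)

lemma isPathChain_zero (u : G.V) : G.IsPathChain u u 0 :=
  ⟨fun _ => by simp, fun _ => by simp⟩

lemma IsPathChain.add_edgeChain {u : G.V} {c : G.H → ℤ} {e : G.H}
    (hc : G.IsPathChain u (G.src e) c) : G.IsPathChain u (G.tar e) (c + G.edgeChain e) := by
  refine ⟨fun h => ?_, fun v => ?_⟩
  · simp only [Pi.add_apply, hc.1 h, edgeChain_bar]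
    ring
  · simp only [Pi.add_apply, sum_add_distrib, hc.2 v, sum_edgeChain]
    ring

lemma exists_isPathChain {A : Set G.H} {u w : G.V} (h : G.ReachIn A u w) :
    ∃ c, G.IsPathChain u w c := by
  induction h with
  | refl => exact ⟨0, isPathChain_zero u⟩
  | tail _ hstep ih =>
    obtain ⟨c, hc⟩ := ih
    obtain ⟨e, -, rfl, rfl⟩ := hstep
    exact ⟨_, hc.add_edgeChain⟩

lemma IsPathChain.sub_mem_cycles {u w : G.V} {c d : G.H → ℤ} (hc : G.IsPathChain u w c)
    (hd : G.IsPathChain u w d) : c - d ∈ G.cycles := by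
  refine ⟨fun e => ?_, fun v => ?_⟩
  · simp only [Pi.sub_apply, hc.1 e, hd.1 e]
    ring
  · simp only [Pi.sub_apply, sum_sub_distrib, hc.2 v, hd.2 v, sub_self]

end Chains

section Potential

variable {W : Type*} [AddCommGroup W]

/-- The potential at `v` pairs `α` with a path chain from `v₀` to `v`; two such chains differ
by a cycle. -/
theorem exists_potential_of_vanishing_on_cycles (hconn : G.Connected) (α : G.H → W)
    (hα : ∀ c ∈ G.cycles, Fintype.linearCombination ℤ α c = 0) (v₀ : G.V) :
    ∃ f : G.V → W, f v₀ = 0 ∧ ∀ e, f (G.tar e) = f (G.src e) + (α e - α (G.bar e)) := by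
  choose c hc using fun v => exists_isPathChain (hconn v₀ v)
  have hpath : ∀ {w : G.V} {d : G.H → ℤ}, G.IsPathChain v₀ w d →
      Fintype.linearCombination ℤ α (c w) = Fintype.linearCombination ℤ α d := fun hd =>
    sub_eq_zero.mp (by rw [← map_sub]; exact hα _ ((hc _).sub_mem_cycles hd))
  refine ⟨fun v => Fintype.linearCombination ℤ α (c v), ?_, fun e => ?_⟩
  · simpa using hpath (isPathChain_zero v₀)
  · dsimp only
    rw [hpath (hc (G.src e)).add_edgeChain, map_add]
    simp [edgeChain, map_sub]

end Potential

section Harmonic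

variable {W : Type*} [AddCommGroup W] [Module ℝ W]

def IsHarmonic (κ : G.H → ℝ) (f : G.V → W) : Prop :=
  ∀ v, ∑ e ∈ univ.filter (fun e => G.tar e = v), κ e • (f v - f (G.src e)) = 0

lemma isHarmonic_inv_of_sum_eq_zero {μ : G.H → ℝ} (hμ : ∀ e, μ e ≠ 0)
    {ω : G.H → W} (hω : ∀ v, ∑ e ∈ univ.filter (fun e => G.tar e = v), ω e = 0)
    {f : G.V → W} (hf : ∀ e, f (G.tar e) = f (G.src e) + μ e • ω e) :
    G.IsHarmonic (fun e => (μ e)⁻¹) f := fun v => by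
  rw [← hω v]
  refine sum_congr rfl fun e he => ?_
  rw [← (mem_filter.mp he).2, hf e, add_sub_cancel_left, smul_smul, inv_mul_cancel₀ (hμ e),
    one_smul]

end Harmonic

section MaximumPrinciple

variable {W : Type*} [NormedAddCommGroup W] [InnerProductSpace ℝ W]

/-- Pairing the harmonicity equation at `v` with `f v` gives a sum of terms that are
nonnegative by Cauchy–Schwarz, hence all zero. -/
lemma IsHarmonic.src_eq_of_forall_norm_le {κ : G.H → ℝ} {f : G.V → W}
    (hf : G.IsHarmonic κ f) (hκ : ∀ e, 0 < κ e) {v : G.V} (hmax : ∀ w, ‖f w‖ ≤ ‖f v‖)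
    {e : G.H} (he : G.tar e = v) : f (G.src e) = f v := by
  have hterm : ∀ h, 0 ≤ κ h * (‖f v‖ ^ 2 - ⟪f v, f (G.src h)⟫) := fun h =>
    mul_nonneg (hκ h).le <| sub_nonneg.mpr <| by
      nlinarith [real_inner_le_norm (f v) (f (G.src h)), hmax (G.src h), norm_nonneg (f v)]
  have hsum : ∑ h ∈ univ.filter (fun h => G.tar h = v),
      κ h * (‖f v‖ ^ 2 - ⟪f v, f (G.src h)⟫) = 0 := by
    have := congrArg (inner ℝ (f v)) (hf v)
    rw [inner_sum, inner_zero_right] at this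
    rw [← this]
    refine sum_congr rfl fun h _ => ?_
    rw [real_inner_smul_right, inner_sub_right, real_inner_self_eq_norm_sq]
  have he0 := (sum_eq_zero_iff_of_nonneg fun h _ => hterm h).mp hsum e
    (mem_filter.mpr ⟨mem_univ e, he⟩)
  refine eq_of_norm_le_of_norm_sq_le_inner (hmax _) ?_
  rcases mul_eq_zero.mp he0 with h | h
  · exact absurd h (hκ e).ne'
  · linarith

theorem IsHarmonic.eq_of_connected {κ : G.H → ℝ} {f : G.V → W} (hf : G.IsHarmonic κ f)
    (hκ : ∀ e, 0 < κ e) (hconn : G.Connected) (v w : G.V) : f v = f w := by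
  have : Nonempty G.V := ⟨v⟩
  obtain ⟨m, hm⟩ := Finite.exists_max fun u => ‖f u‖
  have hreach : ∀ u, G.ReachIn Set.univ u m → f u = f m := fun u h => by
    induction h using Relation.ReflTransGen.head_induction_on with
    | refl => rfl
    | head hstep _ ih =>
      obtain ⟨e, -, rfl, rfl⟩ := hstep
      rw [hf.src_eq_of_forall_norm_le hκ (fun u => ih ▸ hm u) rfl, ih]
  exact (hreach v (hconn v m)).trans (hreach w (hconn w m)).symm

end MaximumPrinciple

end FinGraph

/-- the maximum principle. If `λ` is nondegenerate and `λ_*(ω) = 0`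
on `H₁(Γ)`, then the potential function `f` with `f(v₀) = 0` and
`f(τe) = f(σe) + 2λ(e)ω(e)` is well-defined (exists), is identically zero, and
hence `ω = 0`. -/
theorem lambdaStar_injective_maximum_principle (G : FinGraph) (hconn : G.Connected)
    (W : Type) [NormedAddCommGroup W] [InnerProductSpace ℝ W]
    (lam : G.H → ℝ) (hpos : ∀ e, 0 < lam e ∧ lam e ≤ 1/2)
    (hbar : ∀ e, lam (G.bar e) = lam e)
    (ω : G.H → W) (hω : ω ∈ G.Omega W)
    (hker : ∀ c ∈ G.cycles, ∑ e : G.H, ((c e : ℝ) * lam e) • ω e = 0)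
    (v₀ : G.V) :
    (∃ f : G.V → W, f v₀ = 0 ∧
        ∀ e : G.H, f (G.tar e) = f (G.src e) + (2 * lam e) • ω e) ∧
      (∀ f : G.V → W, (f v₀ = 0 ∧
          ∀ e : G.H, f (G.tar e) = f (G.src e) + (2 * lam e) • ω e) → f = 0) ∧
      ω = 0 := by
  obtain ⟨hωbar, hωsum⟩ := hω
  have hμ : ∀ e, 0 < 2 * lam e := fun e => by linarith [(hpos e).1]
  have huniq : ∀ f : G.V → W, (f v₀ = 0 ∧
      ∀ e : G.H, f (G.tar e) = f (G.src e) + (2 * lam e) • ω e) → f = 0 := by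
    rintro f ⟨hf0, hf⟩
    have hharm := G.isHarmonic_inv_of_sum_eq_zero (fun e => (hμ e).ne') hωsum hf
    funext v
    rw [hharm.eq_of_connected (fun e => inv_pos.mpr (hμ e)) hconn v v₀, hf0, Pi.zero_apply]
  obtain ⟨f, hf0, hf⟩ :=
    G.exists_potential_of_vanishing_on_cycles hconn (fun e => lam e • ω e) (fun c hc => by
      rw [Fintype.linearCombination_apply, ← hker c hc]
      simp only [← Int.cast_smul_eq_zsmul ℝ, mul_smul]) v₀
  have hf' : ∀ e, f (G.tar e) = f (G.src e) + (2 * lam e) • ω e := fun e => by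
    rw [hf e, hbar, hωbar, smul_neg, sub_neg_eq_add, ← add_smul, two_mul]
  have hf_zero := huniq f ⟨hf0, hf'⟩
  refine ⟨⟨f, hf0, hf'⟩, huniq, funext fun e => ?_⟩
  have := hf' e
  rw [hf_zero, Pi.zero_apply, Pi.zero_apply, zero_add, eq_comm, smul_eq_zero] at this
  exact this.resolve_left (hμ e).ne'
end

section
/- Let T be a tree linearly embedded in ℝⁿ and define Φ_T(x) = ∏_edges ψ(‖x − y_i‖) / ∏_vertices ψ(‖x − v_j‖)^(val(v_j)−1), where y_i is the point of edge E_i closest to x (and Φ_T(x) := 0 at vertices). Then 0 ≤ Φ_T(x) ≤ 1 for all x, Φ_T(x) = 0 if and only if x ∈ T, and Φ_T(x) = 1 if and only if dist(x, T) ≥ 3/2. -/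
open Finset Metric

/-- A tree linearly embedded in `ℝⁿ`: finitely many vertices with distinct
positions, an edge set making the vertex set a combinatorial tree, such that the
closed segments realizing the edges meet only at common endpoints and contain no
other vertices. -/
structure EmbTree (n : ℕ) where
  V : Type
  [fV : Fintype V]
  [dV : DecidableEq V]
  pos : V → EuclideanSpace ℝ (Fin n)
  edges : Finset (Sym2 V)
  nodiag : ∀ e ∈ edges, ¬ e.IsDiag
  conn : ∀ u v : V, Relation.ReflTransGen (fun a b => s(a, b) ∈ edges) u v
  treecard : edges.card + 1 = Fintype.card V
  posInj : Function.Injective pos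
  seg_inter : ∀ a b c d : V, s(a, b) ∈ edges → s(c, d) ∈ edges → s(a, b) ≠ s(c, d) →
      ∀ x, x ∈ segment ℝ (pos a) (pos b) → x ∈ segment ℝ (pos c) (pos d) →
        ∃ v : V, pos v = x ∧ (v = a ∨ v = b) ∧ (v = c ∨ v = d)
  vertex_inter : ∀ (v a b : V), s(a, b) ∈ edges →
      pos v ∈ segment ℝ (pos a) (pos b) → v = a ∨ v = b

attribute [instance] EmbTree.fV EmbTree.dV

/-- The segment realizing an unordered pair of vertices. -/
noncomputable def segPos {n : ℕ} {V : Type*} (pos : V → EuclideanSpace ℝ (Fin n))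
    (e : Sym2 V) : Set (EuclideanSpace ℝ (Fin n)) :=
  Sym2.lift ⟨fun a b => segment ℝ (pos a) (pos b), fun a b => segment_symm ℝ (pos a) (pos b)⟩ e

namespace EmbTree

variable {n : ℕ} (T : EmbTree n)

/-- The segment realizing an edge. -/
noncomputable def segOf (e : Sym2 T.V) : Set (EuclideanSpace ℝ (Fin n)) :=
  segPos T.pos e

/-- The geometric realization of the tree: the union of its edge segments. -/
noncomputable def carrier : Set (EuclideanSpace ℝ (Fin n)) :=
  ⋃ e ∈ T.edges, T.segOf e

/-- The valence of a vertex. -/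
def deg (v : T.V) : ℕ := (T.edges.filter (fun e => v ∈ e)).card

/-- The thickening function
`Φ_T(x) = ∏_edges ψ(‖x − y_i‖) / ∏_vertices ψ(‖x − v_j‖)^(val(v_j)−1)`,
where `y_i` is the point of the edge `E_i` closest to `x` (so
`ψ(‖x − y_i‖) = ψ(infDist x E_i)` for monotone `ψ`). (At a vertex the
denominator vanishes and the convention `0/0 = 0` gives `Φ_T = 0` there.) -/
noncomputable def Phi (ψ : ℝ → ℝ) (x : EuclideanSpace ℝ (Fin n)) : ℝ :=
  (∏ e ∈ T.edges, ψ (infDist x (T.segOf e))) /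
    (∏ v : T.V, ψ (dist x (T.pos v)) ^ ((T.deg v : ℤ) - 1))

end EmbTree

/-!
Fix an edge `E₀` and orient every other edge `e` towards it, writing `v_e` for its endpoint
closest to `E₀`. Every vertex `v` is `v_e` for exactly `val(v) − 1` edges: at least one edge at
`v` does not point to `v`, and the handshake lemma together with `|E| = |V| − 1` leaves no room
for a second one. Hence
`Φ_T(x) = ψ(d(x, E₀)) · ∏_{e ≠ E₀} ψ(d(x, e)) / ψ(‖x − v_e‖)`,
a product of factors in `[0, 1]`. If `Φ_T(x) = 1`, every factor is `1`, so `d(x, E₀) ≥ 3/2`, and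
by strict monotonicity of `ψ` below `3/2` an edge `e` closer than `3/2` would have its distance
attained at `v_e`, making the next edge towards `E₀` at least as close; induction along the tree
rules this out.
-/

section Rooting

variable {V : Type*}

theorem SimpleGraph.Connected.exists_adj_dist_add_one {G : SimpleGraph V} (hG : G.Connected)
    {a v : V} (hv : v ≠ a) : ∃ u, G.Adj u v ∧ G.dist a u + 1 = G.dist a v := by
  obtain ⟨p, hp⟩ := hG.exists_walk_length_eq_dist v a
  cases p with
  | nil => exact absurd rfl hv
  | @cons _ u _ hadj q =>
    refine ⟨u, hadj.symm, ?_⟩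
    have hq : G.dist a u ≤ q.length := G.dist_comm ▸ G.dist_le q
    have htri := hG.dist_triangle (u := a) (v := u) (w := v)
    rw [G.dist_comm (u := u), SimpleGraph.dist_eq_one_iff_adj.2 hadj] at htri
    rw [SimpleGraph.Walk.length_cons, G.dist_comm] at hp
    omega

variable [Fintype V] [DecidableEq V]

theorem sum_card_filter_mem_eq_two_mul_card {edges : Finset (Sym2 V)}
    (nodiag : ∀ e ∈ edges, ¬ e.IsDiag) : ∑ v, #{e ∈ edges | v ∈ e} = 2 * #edges := by
  have hcount := sum_card_bipartiteAbove_eq_sum_card_bipartiteBelow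
    (s := univ) (t := edges) (r := fun v e => v ∈ e)
  simp only [bipartiteAbove, bipartiteBelow] at hcount
  rw [hcount, sum_congr rfl fun e he => ?_, sum_const, smul_eq_mul, mul_comm]
  rw [← Sym2.card_toFinset_of_not_isDiag e (nodiag e he)]
  congr 1
  ext v
  simp

/-- `near e` is the endpoint `v_e` of `e` closest to the root edge `E₀` along the tree; `depth`
makes stepping from `e` towards `E₀` well founded. -/
structure EdgeRooting (edges : Finset (Sym2 V)) (E₀ : Sym2 V) where
  near : Sym2 V → V
  depth : V → ℕ
  root_mem : E₀ ∈ edges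
  near_mem (e : Sym2 V) : near e ∈ e
  card_fiber_add_one (v : V) : #{e ∈ edges.erase E₀ | near e = v} + 1 = #{e ∈ edges | v ∈ e}
  exists_step (e : Sym2 V) (he : e ∈ edges.erase E₀) :
    ∃ e' ∈ edges, near e ∈ e' ∧ (e' = E₀ ∨ depth (near e') < depth (near e))

theorem EdgeRooting.prod_zpow_card_sub_one {edges : Finset (Sym2 V)} {E₀ : Sym2 V}
    {M : Type*} [DivisionCommMonoid M] (R : EdgeRooting edges E₀) (g : V → M) :
    ∏ v, g v ^ ((#{e ∈ edges | v ∈ e} : ℤ) - 1) = ∏ e ∈ edges.erase E₀, g (R.near e) := by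
  rw [← prod_fiberwise' (edges.erase E₀) R.near g]
  refine prod_congr rfl fun v _ => ?_
  rw [prod_const, ← R.card_fiber_add_one v]
  push_cast
  rw [add_sub_cancel_right, zpow_natCast]

theorem card_filter_add_one_eq_of_lt {edges : Finset (Sym2 V)}
    (nodiag : ∀ e ∈ edges, ¬ e.IsDiag) (card_edges : #edges + 1 = Fintype.card V)
    {E₀ : Sym2 V} (hE₀ : E₀ ∈ edges) {near : Sym2 V → V}
    (hlt : ∀ v, #{e ∈ edges.erase E₀ | near e = v} < #{e ∈ edges | v ∈ e}) (v : V) :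
    #{e ∈ edges.erase E₀ | near e = v} + 1 = #{e ∈ edges | v ∈ e} := by
  have hsum : ∑ v, (#{e ∈ edges.erase E₀ | near e = v} + 1) = ∑ v, #{e ∈ edges | v ∈ e} := by
    rw [sum_add_distrib, ← card_eq_sum_card_fiberwise fun e _ => mem_univ (near e),
      sum_const, card_univ, smul_eq_mul, mul_one, sum_card_filter_mem_eq_two_mul_card nodiag,
      card_erase_of_mem hE₀]
    have := card_pos.2 ⟨E₀, hE₀⟩
    omega
  exact (sum_eq_sum_iff_of_le fun v _ => hlt v).1 hsum v (mem_univ v)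

theorem exists_edgeRooting {edges : Finset (Sym2 V)} (nodiag : ∀ e ∈ edges, ¬ e.IsDiag)
    (conn : ∀ u v : V, Relation.ReflTransGen (fun a b => s(a, b) ∈ edges) u v)
    (card_edges : #edges + 1 = Fintype.card V) {E₀ : Sym2 V} (hE₀ : E₀ ∈ edges) :
    Nonempty (EdgeRooting edges E₀) := by
  set G := SimpleGraph.fromEdgeSet (edges : Set (Sym2 V))
  have hG : G.Connected := by
    have : Nonempty V := Fintype.card_pos_iff.1 (by omega)
    refine (SimpleGraph.connected_iff G).2 ⟨fun u v => ?_, this⟩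
    refine (SimpleGraph.reachable_iff_reflTransGen u v).2
      (Relation.ReflTransGen.mono (fun a b h => ?_) u v (conn u v))
    exact (SimpleGraph.fromEdgeSet_adj _).2
      ⟨h, fun hab => nodiag _ h (hab ▸ Sym2.mk_isDiag_iff.2 rfl)⟩
  set a₀ := E₀.out.1
  have parent : ∀ v ≠ a₀, ∃ u, s(u, v) ∈ edges ∧ G.dist a₀ u < G.dist a₀ v := by
    intro v hv
    obtain ⟨u, hadj, hd⟩ := hG.exists_adj_dist_add_one hv
    exact ⟨u, ((SimpleGraph.fromEdgeSet_adj _).1 hadj).1, by omega⟩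
  have hmin : ∀ e : Sym2 V, ∃ v ∈ e, ∀ w ∈ e, G.dist a₀ v ≤ G.dist a₀ w := by
    intro e
    induction e using Sym2.ind with
    | _ a b =>
      rcases le_total (G.dist a₀ a) (G.dist a₀ b) with h | h
      · exact ⟨a, Sym2.mem_mk_left a b, by simp [h]⟩
      · exact ⟨b, Sym2.mem_mk_right a b, by simp [h]⟩
  choose near near_mem near_min using hmin
  -- The edge from `v` to a vertex closer to `a₀` (or `E₀`, if `v = a₀`) does not point to `v`.
  have hlt : ∀ v, #{e ∈ edges.erase E₀ | near e = v} < #{e ∈ edges | v ∈ e} := by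
    intro v
    refine card_lt_card ((ssubset_iff_of_subset fun e he => ?_).2 ?_)
    · simp only [mem_filter, mem_erase] at he ⊢
      exact ⟨he.1.2, he.2 ▸ near_mem e⟩
    by_cases hv : v = a₀
    · exact ⟨E₀, by simp [hE₀, hv, a₀, Sym2.out_fst_mem], by simp⟩
    obtain ⟨u, hu, hdu⟩ := parent v hv
    refine ⟨s(u, v), by simp [hu], fun h => ?_⟩
    have := near_min _ u (Sym2.mem_mk_left u v)
    rw [(mem_filter.1 h).2] at this
    omega
  refine ⟨⟨near, G.dist a₀, hE₀, near_mem,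
    card_filter_add_one_eq_of_lt nodiag card_edges hE₀ hlt, fun e _ => ?_⟩⟩
  by_cases hv : near e = a₀
  · exact ⟨E₀, hE₀, hv ▸ Sym2.out_fst_mem E₀, Or.inl rfl⟩
  obtain ⟨u, hu, hdu⟩ := parent (near e) hv
  exact ⟨s(u, near e), hu, Sym2.mem_mk_right _ _,
    Or.inr ((near_min _ u (Sym2.mem_mk_left _ _)).trans_lt hdu)⟩

end Rooting

namespace unitInterval

theorem eq_one_of_mul_eq_one {x y : ℝ} (hx : x ∈ I) (hy : y ∈ I) (h : x * y = 1) :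
    x = 1 ∧ y = 1 := by
  obtain ⟨hx0, hx1⟩ := hx
  obtain ⟨hy0, hy1⟩ := hy
  constructor <;> nlinarith

theorem eq_one_of_prod_eq_one {ι : Type*} {s : Finset ι} {f : ι → ℝ} (hf : ∀ i ∈ s, f i ∈ I)
    (h : ∏ i ∈ s, f i = 1) {j : ι} (hj : j ∈ s) : f j = 1 := by
  classical
  rw [← mul_prod_erase s f hj] at h
  exact (eq_one_of_mul_eq_one (hf j hj)
    (unitInterval.prod_mem fun i hi => hf i (mem_of_mem_erase hi)) h).1

end unitInterval

section Cutoff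

variable {ψ : ℝ → ℝ} {r : ℝ}

theorem monotoneOn_Ici_of_strictMonoOn_Icc (hrange : ∀ t, 0 ≤ t → ψ t ∈ Set.Icc (0 : ℝ) 1)
    (hone : ∀ t, 0 ≤ t → (ψ t = 1 ↔ r ≤ t)) (hmono : StrictMonoOn ψ (Set.Icc 0 r)) :
    MonotoneOn ψ (Set.Ici 0) := by
  intro s hs t ht hst
  rcases le_or_gt t r with htr | hrt
  · exact hmono.monotoneOn ⟨hs, hst.trans htr⟩ ⟨ht, htr⟩ hst
  · rw [(hone t ht).2 hrt.le]
    exact (hrange s hs).2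

theorem eq_of_apply_eq_of_lt (hone : ∀ t, 0 ≤ t → (ψ t = 1 ↔ r ≤ t))
    (hmono : StrictMonoOn ψ (Set.Icc 0 r)) {s t : ℝ} (hs : 0 ≤ s) (hst : s ≤ t) (hsr : s < r)
    (h : ψ s = ψ t) : s = t := by
  rcases le_or_gt t r with htr | hrt
  · exact hmono.injOn ⟨hs, hsr.le⟩ ⟨hs.trans hst, htr⟩ h
  · exact absurd ((hone s hs).1 (h.trans ((hone t (hs.trans hst)).2 hrt.le))) (not_le.2 hsr)

theorem apply_div_apply_mem_unitInterval (hrange : ∀ t, 0 ≤ t → ψ t ∈ Set.Icc (0 : ℝ) 1)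
    (hmon : MonotoneOn ψ (Set.Ici 0)) {s t : ℝ} (hs : 0 ≤ s) (hst : s ≤ t) :
    ψ s / ψ t ∈ unitInterval :=
  unitInterval.div_mem (hrange s hs).1 (hrange t (hs.trans hst)).1
    (hmon hs (Set.mem_Ici.2 (hs.trans hst)) hst)

end Cutoff

namespace EmbTree

variable {n : ℕ} (T : EmbTree n)

theorem pos_mem_segOf {e : Sym2 T.V} {v : T.V} (hv : v ∈ e) : T.pos v ∈ T.segOf e := by
  induction e using Sym2.ind with
  | _ a b =>
    rcases Sym2.mem_iff.1 hv with rfl | rfl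
    · exact left_mem_segment ℝ _ _
    · exact right_mem_segment ℝ _ _

theorem segOf_nonempty (e : Sym2 T.V) : (T.segOf e).Nonempty :=
  ⟨_, T.pos_mem_segOf (Sym2.out_fst_mem e)⟩

theorem isClosed_segOf (e : Sym2 T.V) : IsClosed (T.segOf e) := by
  induction e using Sym2.ind with
  | _ a b =>
    change IsClosed (segment ℝ (T.pos a) (T.pos b))
    rw [← convexHull_pair]
    exact ((Set.toFinite _).isCompact_convexHull ℝ).isClosed

theorem mem_carrier_iff {x : EuclideanSpace ℝ (Fin n)} :
    x ∈ T.carrier ↔ ∃ e ∈ T.edges, x ∈ T.segOf e := by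
  simp [carrier]

theorem segOf_subset_carrier {e : Sym2 T.V} (he : e ∈ T.edges) : T.segOf e ⊆ T.carrier :=
  fun _ hx => T.mem_carrier_iff.2 ⟨e, he, hx⟩

theorem pos_mem_carrier (hedge : T.edges.Nonempty) (v : T.V) : T.pos v ∈ T.carrier := by
  obtain ⟨E₀, hE₀⟩ := hedge
  rcases (T.conn v E₀.out.1).cases_head with rfl | ⟨w, hvw, -⟩
  · exact T.segOf_subset_carrier hE₀ (T.pos_mem_segOf (Sym2.out_fst_mem E₀))
  · exact T.segOf_subset_carrier hvw (T.pos_mem_segOf (Sym2.mem_mk_left v w))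

variable {ψ : ℝ → ℝ} {r : ℝ} {E₀ : Sym2 T.V} {x : EuclideanSpace ℝ (Fin n)}

theorem Phi_eq_mul_prod_div (R : EdgeRooting T.edges E₀) :
    T.Phi ψ x = ψ (infDist x (T.segOf E₀)) *
      ∏ e ∈ T.edges.erase E₀, ψ (infDist x (T.segOf e)) / ψ (dist x (T.pos (R.near e))) := by
  unfold Phi deg
  rw [R.prod_zpow_card_sub_one fun v => ψ (dist x (T.pos v)),
    ← mul_prod_erase _ _ R.root_mem, prod_div_distrib, mul_div_assoc]

theorem le_infDist_segOf_of_forall_near (R : EdgeRooting T.edges E₀)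
    (h₀ : r ≤ infDist x (T.segOf E₀))
    (hnear : ∀ e ∈ T.edges.erase E₀, infDist x (T.segOf e) < r →
      infDist x (T.segOf e) = dist x (T.pos (R.near e))) :
    ∀ e ∈ T.edges, r ≤ infDist x (T.segOf e) := by
  intro e he
  induction hk : R.depth (R.near e) using Nat.strong_induction_on generalizing e with
  | _ k ih =>
    rcases eq_or_ne e E₀ with rfl | hne
    · exact h₀
    have heS : e ∈ T.edges.erase E₀ := mem_erase.2 ⟨hne, he⟩
    obtain ⟨e', he', hmem, hroot⟩ := R.exists_step e heS
    have h' : r ≤ infDist x (T.segOf e') := by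
      rcases hroot with rfl | hlt
      · exact h₀
      · exact ih _ (hk ▸ hlt) e' he' rfl
    by_contra! hlt
    linarith [hnear e heS hlt, infDist_le_dist_of_mem (x := x) (T.pos_mem_segOf hmem)]

theorem Phi_mem_unitInterval (R : EdgeRooting T.edges E₀)
    (hrange : ∀ t, 0 ≤ t → ψ t ∈ Set.Icc (0 : ℝ) 1) (hmon : MonotoneOn ψ (Set.Ici 0)) :
    T.Phi ψ x ∈ unitInterval := by
  rw [T.Phi_eq_mul_prod_div R]
  exact unitInterval.mul_mem (hrange _ infDist_nonneg) (unitInterval.prod_mem fun e _ =>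
    apply_div_apply_mem_unitInterval hrange hmon infDist_nonneg
      (infDist_le_dist_of_mem (T.pos_mem_segOf (R.near_mem e))))

theorem Phi_eq_zero_iff (hedge : T.edges.Nonempty) (hzero : ∀ t, 0 ≤ t → (ψ t = 0 ↔ t = 0)) :
    T.Phi ψ x = 0 ↔ x ∈ T.carrier := by
  have hseg (e : Sym2 T.V) : ψ (infDist x (T.segOf e)) = 0 ↔ x ∈ T.segOf e :=
    (hzero _ infDist_nonneg).trans
      ((T.isClosed_segOf e).mem_iff_infDist_zero (T.segOf_nonempty e)).symm
  simp only [Phi, div_eq_zero_iff, prod_eq_zero_iff, mem_univ, true_and]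
  constructor
  · rintro (⟨e, he, h⟩ | ⟨v, h⟩)
    · exact T.segOf_subset_carrier he ((hseg e).1 h)
    · rw [dist_eq_zero.1 ((hzero _ dist_nonneg).1 (eq_zero_of_zpow_eq_zero h))]
      exact T.pos_mem_carrier hedge v
  · intro hx
    obtain ⟨e, he, hxe⟩ := T.mem_carrier_iff.1 hx
    exact Or.inl ⟨e, he, (hseg e).2 hxe⟩

theorem Phi_eq_one_of_le_infDist (hedge : T.edges.Nonempty)
    (hone : ∀ t, 0 ≤ t → (ψ t = 1 ↔ r ≤ t)) (hx : r ≤ infDist x T.carrier) :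
    T.Phi ψ x = 1 := by
  have hψ {t : ℝ} (ht : infDist x T.carrier ≤ t) : ψ t = 1 :=
    (hone t (infDist_nonneg.trans ht)).2 (hx.trans ht)
  rw [Phi, prod_eq_one fun e he => hψ (infDist_le_infDist_of_subset
      (T.segOf_subset_carrier he) (T.segOf_nonempty e)),
    prod_eq_one fun v _ => by rw [hψ (infDist_le_dist_of_mem (T.pos_mem_carrier hedge v)),
      one_zpow], div_one]

theorem le_infDist_of_Phi_eq_one (R : EdgeRooting T.edges E₀)
    (hrange : ∀ t, 0 ≤ t → ψ t ∈ Set.Icc (0 : ℝ) 1) (hone : ∀ t, 0 ≤ t → (ψ t = 1 ↔ r ≤ t))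
    (hmono : StrictMonoOn ψ (Set.Icc 0 r)) (hΦ : T.Phi ψ x = 1) :
    r ≤ infDist x T.carrier := by
  have hmon := monotoneOn_Ici_of_strictMonoOn_Icc hrange hone hmono
  have hle (e : Sym2 T.V) : infDist x (T.segOf e) ≤ dist x (T.pos (R.near e)) :=
    infDist_le_dist_of_mem (T.pos_mem_segOf (R.near_mem e))
  rw [T.Phi_eq_mul_prod_div R] at hΦ
  obtain ⟨h₀, hprod⟩ := unitInterval.eq_one_of_mul_eq_one (hrange _ infDist_nonneg)
    (unitInterval.prod_mem fun e _ =>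
      apply_div_apply_mem_unitInterval hrange hmon infDist_nonneg (hle e)) hΦ
  have hnear (e) (he : e ∈ T.edges.erase E₀) (hlt : infDist x (T.segOf e) < r) :
      infDist x (T.segOf e) = dist x (T.pos (R.near e)) := by
    refine eq_of_apply_eq_of_lt hone hmono infDist_nonneg (hle e) hlt (eq_of_div_eq_one ?_)
    exact unitInterval.eq_one_of_prod_eq_one (fun e _ =>
      apply_div_apply_mem_unitInterval hrange hmon infDist_nonneg (hle e)) hprod he
  have hedges := T.le_infDist_segOf_of_forall_near R ((hone _ infDist_nonneg).1 h₀) hnear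
  rw [le_infDist ⟨_, T.segOf_subset_carrier R.root_mem (T.pos_mem_segOf (R.near_mem E₀))⟩]
  intro y hy
  obtain ⟨e, he, hye⟩ := T.mem_carrier_iff.1 hy
  exact (hedges e he).trans (infDist_le_dist_of_mem hye)

end EmbTree

open Metric in
theorem Phi_bounds_general (n : ℕ) (T : EmbTree n) (hedge : T.edges.Nonempty)
    (ψ : ℝ → ℝ)
    (hrange : ∀ t, 0 ≤ t → ψ t ∈ Set.Icc (0 : ℝ) 1)
    (hzero : ∀ t, 0 ≤ t → (ψ t = 0 ↔ t = 0))
    (hone : ∀ t, 0 ≤ t → (ψ t = 1 ↔ 3/2 ≤ t))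
    (hmono : StrictMonoOn ψ (Set.Icc 0 (3/2))) :
    ∀ x : EuclideanSpace ℝ (Fin n),
      (0 ≤ T.Phi ψ x ∧ T.Phi ψ x ≤ 1) ∧
      (T.Phi ψ x = 0 ↔ x ∈ T.carrier) ∧
      (T.Phi ψ x = 1 ↔ 3/2 ≤ infDist x T.carrier) := by
  intro x
  obtain ⟨E₀, hE₀⟩ := hedge
  obtain ⟨R⟩ := exists_edgeRooting T.nodiag T.conn T.treecard hE₀
  exact ⟨T.Phi_mem_unitInterval R hrange (monotoneOn_Ici_of_strictMonoOn_Icc hrange hone hmono),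
    T.Phi_eq_zero_iff ⟨E₀, hE₀⟩ hzero,
    T.le_infDist_of_Phi_eq_one R hrange hone hmono,
    T.Phi_eq_one_of_le_infDist ⟨E₀, hE₀⟩ hone⟩

open Metric in
/-- basic properties of the thickening function of an embedded
tree: `0 ≤ Φ_T ≤ 1`, `Φ_T(x) = 0` iff `x ∈ T`, and `Φ_T(x) = 1` iff
`dist(x, T) ≥ 3/2`. -/
theorem Phi_bounds (n : ℕ) (T : EmbTree n) (hedge : T.edges.Nonempty)
    (ψ : ℝ → ℝ) (hcont : Continuous ψ)
    (hrange : ∀ t, 0 ≤ t → ψ t ∈ Set.Icc (0 : ℝ) 1)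
    (hzero : ∀ t, 0 ≤ t → (ψ t = 0 ↔ t = 0))
    (hone : ∀ t, 0 ≤ t → (ψ t = 1 ↔ 3/2 ≤ t))
    (hmono : StrictMonoOn ψ (Set.Icc 0 (3/2))) :
    ∀ x : EuclideanSpace ℝ (Fin n),
      (0 ≤ T.Phi ψ x ∧ T.Phi ψ x ≤ 1) ∧
      (T.Phi ψ x = 0 ↔ x ∈ T.carrier) ∧
      (T.Phi ψ x = 1 ↔ 3/2 ≤ infDist x T.carrier) :=
  Phi_bounds_general n T hedge ψ hrange hzero hone hmono
end
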